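/- If graphs G and H have no false twins, then the co-normal product G ⋆ H has no false twins. -/

import Mathlib

open SimpleGraph

/-- The co-normal product of two simple graphs. -/
def conormalProd {α β : Type*} (G : SimpleGraph α) (H : SimpleGraph β) :
    SimpleGraph (α × β) where
  Adj x y := G.Adj x.1 y.1 ∨ H.Adj x.2 y.2
  symm := ⟨fun x y h => h.imp (fun a => a.symm) (fun a => a.symm)⟩
  loopless := ⟨fun x h => h.elim (G.loopless.irrefl x.1) (H.loopless.irrefl x.2)⟩

/-- The distinguishing number of a graph. -/
noncomputable def distinguishingNumber {α : Type*} (G : SimpleGraph α) : ℕ :=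
  sInf {d | ∃ c : α → Fin d,
    ∀ φ : G ≃g G, (∀ v, c (φ v) = c v) → φ = SimpleGraph.Iso.refl}

/-- The distinguishing index of a graph. -/
noncomputable def distinguishingIndex {α : Type*} (G : SimpleGraph α) : ℕ :=
  sInf {d | ∃ c : G.edgeSet → Fin d,
    ∀ φ : G ≃g G, (∀ e, c (φ.mapEdgeSet e) = c e) → φ = SimpleGraph.Iso.refl}

/-- A dominating vertex: adjacent to all other vertices. -/
def IsDominatingVertex {α : Type*} (G : SimpleGraph α) (v : α) : Prop :=
  ∀ w, w ≠ v → G.Adj v w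

/-- Two vertices are false twins if they are distinct and have equal open neighborhoods. -/
def FalseTwins {α : Type*} (G : SimpleGraph α) (u v : α) : Prop :=
  u ≠ v ∧ G.neighborSet u = G.neighborSet v

/-- A graph is rigid if its only automorphism is the identity. -/
def GraphRigid {α : Type*} (G : SimpleGraph α) : Prop :=
  ∀ φ : G ≃g G, φ = SimpleGraph.Iso.refl

section ConormalProd

variable {α β : Type*} {G : SimpleGraph α} {H : SimpleGraph β} {x y : α × β}

@[simp]
lemma conormalProd_adj :
    (conormalProd G H).Adj x y ↔ G.Adj x.1 y.1 ∨ H.Adj x.2 y.2 :=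
  Iff.rfl

-- Test the inclusion at `(a, y.2)`: the loop `H.Adj y.2 y.2` is impossible.
lemma neighborSet_fst_subset_of_conormalProd
    (h : (conormalProd G H).neighborSet x ⊆ (conormalProd G H).neighborSet y) :
    G.neighborSet x.1 ⊆ G.neighborSet y.1 := fun a ha =>
  (conormalProd_adj.mp (h (Or.inl ha : (conormalProd G H).Adj x (a, y.2)))).resolve_right
    (H.loopless.irrefl _)

lemma neighborSet_snd_subset_of_conormalProd
    (h : (conormalProd G H).neighborSet x ⊆ (conormalProd G H).neighborSet y) :
    H.neighborSet x.2 ⊆ H.neighborSet y.2 := fun b hb =>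
  (conormalProd_adj.mp (h (Or.inr hb : (conormalProd G H).Adj x (y.1, b)))).resolve_left
    (G.loopless.irrefl _)

lemma conormalProd_neighborSet_subset_iff :
    (conormalProd G H).neighborSet x ⊆ (conormalProd G H).neighborSet y ↔
      G.neighborSet x.1 ⊆ G.neighborSet y.1 ∧ H.neighborSet x.2 ⊆ H.neighborSet y.2 :=
  ⟨fun h => ⟨neighborSet_fst_subset_of_conormalProd h, neighborSet_snd_subset_of_conormalProd h⟩,
    fun ⟨hG, hH⟩ _ hz => hz.imp (@hG _) (@hH _)⟩

lemma conormalProd_neighborSet_eq_iff :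
    (conormalProd G H).neighborSet x = (conormalProd G H).neighborSet y ↔
      G.neighborSet x.1 = G.neighborSet y.1 ∧ H.neighborSet x.2 = H.neighborSet y.2 := by
  simp only [subset_antisymm_iff, conormalProd_neighborSet_subset_iff]
  tauto

lemma FalseTwins.of_conormalProd (h : FalseTwins (conormalProd G H) x y) :
    FalseTwins G x.1 y.1 ∨ FalseTwins H x.2 y.2 := by
  obtain ⟨hne, hN⟩ := h
  obtain ⟨hN₁, hN₂⟩ := conormalProd_neighborSet_eq_iff.mp hN
  by_cases h₁ : x.1 = y.1
  · exact .inr ⟨fun h₂ => hne (Prod.ext h₁ h₂), hN₂⟩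
  · exact .inl ⟨h₁, hN₁⟩

end ConormalProd

theorem stmt4 {α β : Type*} (G : SimpleGraph α) (H : SimpleGraph β)
    (hG : ∀ u v : α, ¬ FalseTwins G u v) (hH : ∀ u v : β, ¬ FalseTwins H u v) :
    ∀ x y : α × β, ¬ FalseTwins (conormalProd G H) x y :=
  fun x y h => h.of_conormalProd.elim (hG x.1 y.1) (hH x.2 y.2)
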